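/- arXiv:1901.06369 — 6 statements merged into one kernel-verified Lean document; each statement's English description precedes it below -/
import Mathlib

section
/- Fix β₀ > 0 and a sequence of constants (K_k)_{k≥0}. Then there exist r̲₀ ≥ 2 and b > 0, depending only on β₀ and the constants (K_k), with the following property. Suppose u : ℝ² → ℝ is smooth, solves L_{1/2}u := Δu − (1/2)(⟨x, ∇u(x)⟩ − u(x)) = 0 on all of ℝ², and satisfies |∇^k u(x)| ≤ K_k (1 + |x|)^{1−k} for every k ≥ 0 and every x ∈ ℝ². If moreover ‖u‖_{C³(B_{r̲+2}(0))} ≤ b for some r̲ ≥ r̲₀, then there exist a continuous function c : S¹ → ℝ and a function f defined on {x ∈ ℝ² : |x| ≥ 1} such that u(x) = c(x/|x|)·|x| + f(x) for all |x| ≥ 1, and sup_{ω∈S¹} |c(ω)| + sup_{|x|≥1} |x|·|f(x)| ≤ β₀. -/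
/-!
Let `v = ⟨x, ∇u⟩ - u`. The equation says `Δu = v / 2`, so the bound on `∇²u` makes `v` decay at
infinity, and the commutator identity `Δ⟨x, ∇u⟩ = ⟨x, ∇Δu⟩ + 2Δu` turns the equation into
`Δv = (⟨x, ∇v⟩ + v) / 2`. At a positive maximum of `v` the left side is `≤ 0` and the right side
is `> 0`; the same holds for `-v`, so `v = 0`. Hence `u` is positively homogeneous of degree one,
`u x = ‖x‖ u (x / ‖x‖)`, and one may take `c = u`, `f = 0`: on the unit sphere `|u|` is controlled
by the `C³` norm on `B_{r+2}(0)`, so `b = β₀` works.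
-/

open Metric Real Filter Topology InnerProductSpace Laplacian
open scoped ContDiff

section
variable {E F : Type*} [NormedAddCommGroup E] [NormedSpace ℝ E] [NormedAddCommGroup F]
  [NormedSpace ℝ F] {A : E → E →L[ℝ] F} {x : E}

theorem fderiv_clm_apply_const (hA : DifferentiableAt ℝ A x) (a v : E) :
    fderiv ℝ (fun y => A y a) x v = fderiv ℝ A x v a := by
  simp [fderiv_clm_apply hA (differentiableAt_const a)]

theorem fderiv_clm_apply_self (hA : DifferentiableAt ℝ A x) (v : E) :
    fderiv ℝ (fun y => A y y) x v = fderiv ℝ A x v x + A x v := by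
  have h := (hA.hasFDerivAt.clm_apply (hasFDerivAt_id x)).fderiv
  simp only [id] at h
  simp [h, add_comm]

theorem fderiv_clm_apply_const_const {B : E → E →L[ℝ] E →L[ℝ] F} (hB : DifferentiableAt ℝ B x)
    (a b v : E) : fderiv ℝ (fun y => B y a b) x v = fderiv ℝ B x v a b := by
  rw [fderiv_clm_apply_const (hB.clm_apply (differentiableAt_const a)),
    fderiv_clm_apply_const hB]

end

section
variable {E F : Type*} [NormedAddCommGroup E] [NormedSpace ℝ E] [NormedAddCommGroup F]
  [NormedSpace ℝ F] {u : E → F}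

theorem fderiv_fderiv_fderiv_swap_left (hu : ContDiff ℝ 3 u) (x a b c : E) :
    fderiv ℝ (fderiv ℝ (fderiv ℝ u)) x a b c = fderiv ℝ (fderiv ℝ (fderiv ℝ u)) x b a c := by
  rw [((hu.fderiv_right (m := 2) (by norm_num)).contDiffAt.isSymmSndFDerivAt (by simp)).eq a b]

theorem fderiv_fderiv_fderiv_swap_right (hu : ContDiff ℝ 3 u) (x a b c : E) :
    fderiv ℝ (fderiv ℝ (fderiv ℝ u)) x a b c = fderiv ℝ (fderiv ℝ (fderiv ℝ u)) x a c b := by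
  have hD2 := (hu.fderiv_right (m := 2) (by norm_num)).fderiv_right (m := 1) (by norm_num)
  have hsymm (y : E) : fderiv ℝ (fderiv ℝ u) y b c = fderiv ℝ (fderiv ℝ u) y c b :=
    (hu.contDiffAt.isSymmSndFDerivAt (by simp; norm_num)).eq b c
  rw [← fderiv_clm_apply_const_const (hD2.differentiable (by norm_num) x),
    ← fderiv_clm_apply_const_const (hD2.differentiable (by norm_num) x), funext hsymm]

theorem fderiv_fderiv_fun_fderiv_apply_self (hu : ContDiff ℝ 3 u) (x a : E) :
    fderiv ℝ (fderiv ℝ (fun y => fderiv ℝ u y y)) x a a =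
      fderiv ℝ (fderiv ℝ (fderiv ℝ u)) x a a x + (2 : ℝ) • fderiv ℝ (fderiv ℝ u) x a a := by
  have hD1 : ContDiff ℝ 2 (fderiv ℝ u) := hu.fderiv_right (by norm_num)
  have hD2 : ContDiff ℝ 1 (fderiv ℝ (fderiv ℝ u)) := hD1.fderiv_right (by norm_num)
  have hg : ContDiff ℝ 2 (fun y => fderiv ℝ u y y) := hD1.clm_apply contDiff_id
  have hdg (y : E) : fderiv ℝ (fun z => fderiv ℝ u z z) y a =
      fderiv ℝ (fderiv ℝ u) y a y + fderiv ℝ u y a :=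
    fderiv_clm_apply_self (hD1.differentiable (by norm_num) y) a
  rw [← fderiv_clm_apply_const ((hg.fderiv_right (m := 1) (by norm_num)).differentiable
    (by norm_num) x), funext hdg]
  have hD2a : DifferentiableAt ℝ (fun y => fderiv ℝ (fderiv ℝ u) y a) x :=
    (hD2.differentiable one_ne_zero x).clm_apply (differentiableAt_const a)
  rw [fderiv_fun_add (hD2a.clm_apply differentiableAt_fun_id)
      ((hD1.differentiable (by norm_num) x).clm_apply (differentiableAt_const a)),
    add_apply, fderiv_clm_apply_self hD2a,
    fderiv_clm_apply_const (hD2.differentiable one_ne_zero x),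
    fderiv_clm_apply_const (hD1.differentiable (by norm_num) x), two_smul, add_assoc]
end

theorem IsLocalMax.deriv_deriv_nonpos {f : ℝ → ℝ} {x₀ : ℝ} (h : IsLocalMax f x₀)
    (hc : ContinuousAt f x₀) : deriv (deriv f) x₀ ≤ 0 := by
  by_contra! hpos
  have hmin := isLocalMin_of_deriv_deriv_pos hpos h.deriv_eq_zero hc
  have hf : f =ᶠ[𝓝 x₀] fun _ => f x₀ := (hmin.and h).mono fun x hx => le_antisymm hx.2 hx.1
  rw [hf.deriv.deriv_eq] at hpos
  simp at hpos

theorem IsLocalMax.fderiv_fderiv_apply_apply_nonpos {E : Type*} [NormedAddCommGroup E]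
    [NormedSpace ℝ E] {f : E → ℝ} {x₀ : E} (hf : ContDiff ℝ 2 f) (h : IsLocalMax f x₀) (v : E) :
    fderiv ℝ (fderiv ℝ f) x₀ v v ≤ 0 := by
  have hline (t : ℝ) : HasDerivAt (fun t : ℝ => x₀ + t • v) v t := by
    simpa using ((hasDerivAt_id t).smul_const v).const_add x₀
  have hderiv : deriv (fun t : ℝ => f (x₀ + t • v)) = fun t => fderiv ℝ f (x₀ + t • v) v :=
    funext fun t => ((hf.differentiable (by norm_num) _).hasFDerivAt.comp_hasDerivAt t
      (hline t)).deriv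
  have hD2 : HasFDerivAt (fderiv ℝ f) (fderiv ℝ (fderiv ℝ f) x₀) (x₀ + (0 : ℝ) • v) := by
    simpa using ((hf.fderiv_right (m := 1) (by norm_num)).differentiable (by norm_num)
      x₀).hasFDerivAt
  have hderiv2 :
      deriv (fun t : ℝ => fderiv ℝ f (x₀ + t • v) v) 0 = fderiv ℝ (fderiv ℝ f) x₀ v v := by
    simpa [Function.comp_def] using
      ((hD2.clm_apply (hasFDerivAt_const v _)).comp_hasDerivAt 0 (hline 0)).deriv
  have hmax : IsLocalMax (fun t : ℝ => f (x₀ + t • v)) 0 :=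
    IsLocalMax.comp_continuous (g := fun t : ℝ => x₀ + t • v) (by simpa using h) (by fun_prop)
  have := hmax.deriv_deriv_nonpos (hf.continuous.comp (by fun_prop)).continuousAt
  rwa [hderiv, hderiv2] at this

section
variable {E F : Type*} [NormedAddCommGroup E] [InnerProductSpace ℝ E] [FiniteDimensional ℝ E]
  [NormedAddCommGroup F] [NormedSpace ℝ F]

theorem InnerProductSpace.laplacian_eq_sum_fderiv_fderiv {ι : Type*} [Fintype ι]
    (e : OrthonormalBasis ι ℝ E) (f : E → F) (x : E) :
    Δ f x = ∑ i, fderiv ℝ (fderiv ℝ f) x (e i) (e i) := by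
  simp [laplacian_eq_iteratedFDeriv_orthonormalBasis f e, iteratedFDeriv_two_apply]

theorem laplacian_fun_fderiv_apply_self {u : E → F} (hu : ContDiff ℝ 3 u) (x : E) :
    Δ (fun y => fderiv ℝ u y y) x = fderiv ℝ (Δ u) x x + (2 : ℝ) • Δ u x := by
  set e := stdOrthonormalBasis ℝ E
  have hD2 : ContDiff ℝ 1 (fderiv ℝ (fderiv ℝ u)) :=
    (hu.fderiv_right (m := 2) (by norm_num)).fderiv_right (by norm_num)
  have hΔ : fderiv ℝ (Δ u) x x = ∑ i, fderiv ℝ (fderiv ℝ (fderiv ℝ u)) x x (e i) (e i) := by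
    rw [funext (laplacian_eq_sum_fderiv_fderiv e u), fderiv_fun_sum fun i _ =>
      ((hD2.differentiable one_ne_zero x).clm_apply (differentiableAt_const _)).clm_apply
        (differentiableAt_const _), sum_apply]
    exact Finset.sum_congr rfl fun i _ =>
      fderiv_clm_apply_const_const (hD2.differentiable one_ne_zero x) _ _ x
  rw [laplacian_eq_sum_fderiv_fderiv e, laplacian_eq_sum_fderiv_fderiv e, hΔ, Finset.smul_sum,
    ← Finset.sum_add_distrib]
  refine Finset.sum_congr rfl fun i _ => ?_
  rw [fderiv_fderiv_fun_fderiv_apply_self hu, fderiv_fderiv_fderiv_swap_right hu,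
    fderiv_fderiv_fderiv_swap_left hu]

theorem InnerProductSpace.norm_laplacian_le (f : E → F) (x : E) :
    ‖Δ f x‖ ≤ Module.finrank ℝ E * ‖iteratedFDeriv ℝ 2 f x‖ := by
  set e := stdOrthonormalBasis ℝ E
  rw [laplacian_eq_iteratedFDeriv_orthonormalBasis f e]
  calc ‖∑ i, iteratedFDeriv ℝ 2 f x ![e i, e i]‖
      ≤ ∑ _i : Fin (Module.finrank ℝ E), ‖iteratedFDeriv ℝ 2 f x‖ :=
        norm_sum_le_of_le _ fun i _ => by
          simpa [e.orthonormal.1 i] using (iteratedFDeriv ℝ 2 f x).le_opNorm ![e i, e i]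
    _ = Module.finrank ℝ E * ‖iteratedFDeriv ℝ 2 f x‖ := by simp

theorem InnerProductSpace.tendsto_laplacian_cocompact_zero {f : E → F} {C s : ℝ} (hs : 0 < s)
    (h : ∀ x, ‖iteratedFDeriv ℝ 2 f x‖ ≤ C * (1 + ‖x‖) ^ (-s)) :
    Tendsto (Δ f) (cocompact E) (𝓝 0) := by
  have hdecay : Tendsto (fun x : E => C * (1 + ‖x‖) ^ (-s)) (cocompact E) (𝓝 0) := by
    simpa using ((tendsto_rpow_neg_atTop hs).comp
      (tendsto_atTop_add_const_left _ 1 tendsto_norm_cocompact_atTop)).const_mul C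
  refine squeeze_zero_norm (fun x => (norm_laplacian_le f x).trans ?_)
    (by simpa using hdecay.const_mul (Module.finrank ℝ E : ℝ))
  exact mul_le_mul_of_nonneg_left (h x) (Nat.cast_nonneg _)

theorem IsLocalMax.laplacian_nonpos {f : E → ℝ} {x : E} (hf : ContDiff ℝ 2 f)
    (h : IsLocalMax f x) : Δ f x ≤ 0 := by
  rw [laplacian_eq_sum_fderiv_fderiv (stdOrthonormalBasis ℝ E)]
  exact Finset.sum_nonpos fun i _ => h.fderiv_fderiv_apply_apply_nonpos hf _

theorem nonpos_of_laplacian_eq_fderiv_add_mul {w : E → ℝ} (hw : ContDiff ℝ 2 w) {V : E → E}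
    {c : ℝ} (hc : 0 < c) (hpde : ∀ x, Δ w x = fderiv ℝ w x (V x) + c * w x)
    (hlim : Tendsto w (cocompact E) (𝓝 0)) (x : E) : w x ≤ 0 := by
  by_contra! hx
  obtain ⟨x₀, hx₀⟩ := hw.continuous.exists_forall_ge' x
    ((hlim.eventually (gt_mem_nhds hx)).mono fun _ => le_of_lt)
  have hmax : IsLocalMax w x₀ := Filter.Eventually.of_forall hx₀
  have := hmax.laplacian_nonpos hw
  rw [hpde, hmax.fderiv_eq_zero, zero_apply, zero_add] at this
  nlinarith [hx₀ x]

theorem eq_zero_of_laplacian_eq_fderiv_add_mul {w : E → ℝ} (hw : ContDiff ℝ 2 w) {V : E → E}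
    {c : ℝ} (hc : 0 < c) (hpde : ∀ x, Δ w x = fderiv ℝ w x (V x) + c * w x)
    (hlim : Tendsto w (cocompact E) (𝓝 0)) (x : E) : w x = 0 := by
  have hpde_neg (y : E) : Δ (-w) y = fderiv ℝ (-w) y (V y) + c * (-w) y := by
    rw [laplacian_neg, Pi.neg_apply, hpde, fderiv_neg]
    simp only [neg_apply, Pi.neg_apply]
    ring
  have := nonpos_of_laplacian_eq_fderiv_add_mul hw.neg hc hpde_neg (by simpa using hlim.neg) x
  exact le_antisymm (nonpos_of_laplacian_eq_fderiv_add_mul hw hc hpde hlim x) (by simpa using this)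

theorem laplacian_fun_fderiv_apply_self_sub {u : E → ℝ} (hu : ContDiff ℝ 3 u) {a : ℝ}
    (h : ∀ x, Δ u x = a * (fderiv ℝ u x x - u x)) (x : E) :
    Δ (fun y => fderiv ℝ u y y - u y) x =
      fderiv ℝ (fun y => fderiv ℝ u y y - u y) x (a • x) + a * (fderiv ℝ u x x - u x) := by
  have hg : ContDiff ℝ 2 (fun y => fderiv ℝ u y y) :=
    (hu.fderiv_right (m := 2) (by norm_num)).clm_apply contDiff_id
  have hv : ContDiff ℝ 2 (fun y => fderiv ℝ u y y - u y) := hg.sub (hu.of_le (by norm_num))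
  change Δ ((fun y => fderiv ℝ u y y) - u) x = _
  rw [hg.contDiffAt.laplacian_sub (hu.of_le (by norm_num)).contDiffAt,
    laplacian_fun_fderiv_apply_self hu, funext h,
    fderiv_const_mul (hv.differentiable (by norm_num) x), map_smul]
  simp only [smul_apply, smul_eq_mul]
  ring
end

theorem apply_smul_of_fderiv_apply_self_eq {E F : Type*} [NormedAddCommGroup E] [NormedSpace ℝ E]
    [NormedAddCommGroup F] [NormedSpace ℝ F] {u : E → F} (hu : Differentiable ℝ u)
    (h : ∀ x, fderiv ℝ u x x = u x) (x : E) {t : ℝ} (ht : 0 < t) : u (t • x) = t • u x := by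
  have hderiv (s : ℝ) (hs : s ≠ 0) : HasDerivAt (fun s : ℝ => s⁻¹ • u (s • x)) 0 s := by
    have hray : HasDerivAt (fun s : ℝ => s • x) x s := by
      simpa using (hasDerivAt_id s).smul_const x
    refine ((hasDerivAt_inv hs).fun_smul
      ((hu (s • x)).hasFDerivAt.comp_hasDerivAt s hray)).congr_deriv ?_
    have : u (s • x) = s • fderiv ℝ u (s • x) x := by rw [← map_smul, h]
    rw [Function.comp_apply, this, smul_smul, ← add_smul]
    field_simp
    simp
  have hconst := isOpen_Ioi.is_const_of_deriv_eq_zero isPreconnected_Ioi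
    (fun s hs => (hderiv s (ne_of_gt hs)).differentiableAt.differentiableWithinAt)
    (fun s hs => (hderiv s (ne_of_gt hs)).deriv) (Set.mem_Ioi.mpr ht) (Set.mem_Ioi.mpr one_pos)
  simp only [inv_one, one_smul] at hconst
  rw [← hconst, smul_inv_smul₀ ht.ne']

/-- **Model problem for the extension of the conical scale** (Lemma 1.4).
Fix `β₀ > 0` and constants `K k`. There exist `r₀ ≥ 2` and `b > 0`, depending only on `β₀`
and the `K k`, such that: if `u : ℝ² → ℝ` is smooth, solves
`Δu - (1/2)(⟨x, ∇u⟩ - u) = 0` on all of `ℝ²`, satisfies `|∇^k u(x)| ≤ K k (1+|x|)^{1-k}`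
for all `k` and `x`, and has `C³` norm at most `b` on `B_{r+2}(0)` for some `r ≥ r₀`, then
`u(x) = c(x/|x|)|x| + f(x)` for `|x| ≥ 1`, with
`sup |c| + sup |x||f(x)| ≤ β₀`. -/
theorem stmt_0 (β₀ : ℝ) (hβ₀ : 0 < β₀) (K : ℕ → ℝ) :
    ∃ r₀ b : ℝ, 2 ≤ r₀ ∧ 0 < b ∧
      ∀ u : EuclideanSpace ℝ (Fin 2) → ℝ, ContDiff ℝ ∞ u →
        (∀ x : EuclideanSpace ℝ (Fin 2),
          (∑ i : Fin 2,
              iteratedFDeriv ℝ 2 u x (fun _ => EuclideanSpace.single i (1 : ℝ)))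
            - (1 / 2) * ((inner ℝ x (gradient u x) : ℝ) - u x) = 0) →
        (∀ (k : ℕ) (x : EuclideanSpace ℝ (Fin 2)),
          ‖iteratedFDeriv ℝ k u x‖ ≤ K k * (1 + ‖x‖) ^ ((1 : ℝ) - k)) →
        ∀ r : ℝ, r₀ ≤ r →
          (∀ x ∈ ball (0 : EuclideanSpace ℝ (Fin 2)) (r + 2),
            ∑ j ∈ Finset.range 4, ‖iteratedFDeriv ℝ j u x‖ ≤ b) →
          ∃ c f : EuclideanSpace ℝ (Fin 2) → ℝ,
            ContinuousOn c (sphere (0 : EuclideanSpace ℝ (Fin 2)) 1) ∧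
            (∀ x : EuclideanSpace ℝ (Fin 2), 1 ≤ ‖x‖ →
              u x = c (‖x‖⁻¹ • x) * ‖x‖ + f x) ∧
            (∀ w : EuclideanSpace ℝ (Fin 2), ‖w‖ = 1 →
              ∀ x : EuclideanSpace ℝ (Fin 2), 1 ≤ ‖x‖ →
                |c w| + ‖x‖ * |f x| ≤ β₀) := by
  refine ⟨2, β₀, le_rfl, hβ₀, fun u hu hpde hK r hr hb => ?_⟩
  have hΔ (x : EuclideanSpace ℝ (Fin 2)) : Δ u x = (1 / 2) * (fderiv ℝ u x x - u x) := by
    rw [laplacian_eq_sum_fderiv_fderiv (EuclideanSpace.basisFun (Fin 2) ℝ), ← sub_eq_zero]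
    simpa [iteratedFDeriv_two_apply, inner_gradient_right] using hpde x
  have hΔlim : Tendsto (Δ u) (cocompact _) (𝓝 0) :=
    tendsto_laplacian_cocompact_zero one_pos fun x => by
      convert hK 2 x using 3
      norm_num
  have hu3 : ContDiff ℝ 3 u := hu.of_le ENat.LEInfty.out
  have hEuler (x : EuclideanSpace ℝ (Fin 2)) : fderiv ℝ u x x = u x := by
    refine sub_eq_zero.mp (eq_zero_of_laplacian_eq_fderiv_add_mul ?_ one_half_pos
      (laplacian_fun_fderiv_apply_self_sub hu3 hΔ) ?_ x)
    · exact ((hu3.fderiv_right (m := 2) (by norm_num)).clm_apply contDiff_id).sub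
        (hu3.of_le (by norm_num))
    · simpa using (hΔlim.const_mul 2).congr fun x => by rw [hΔ]; ring
  refine ⟨u, 0, hu.continuous.continuousOn, fun x hx => ?_, fun w hw x _ => ?_⟩
  · have hx_pos : 0 < ‖x‖ := one_pos.trans_le hx
    simpa [smul_smul, hx_pos.ne', mul_comm] using apply_smul_of_fderiv_apply_self_eq
      (hu3.differentiable (by norm_num)) hEuler (‖x‖⁻¹ • x) hx_pos
  · have hw_mem : w ∈ ball (0 : EuclideanSpace ℝ (Fin 2)) (r + 2) := by
      rw [mem_ball_zero_iff, hw]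
      linarith
    calc |u w| + ‖x‖ * |(0 : EuclideanSpace ℝ (Fin 2) → ℝ) x|
        = ‖iteratedFDeriv ℝ 0 u w‖ := by simp
      _ ≤ ∑ j ∈ Finset.range 4, ‖iteratedFDeriv ℝ j u w‖ :=
        Finset.single_le_sum (f := fun j => ‖iteratedFDeriv ℝ j u w‖)
          (fun j _ => norm_nonneg _) (by simp)
      _ ≤ β₀ := hb w hw_mem
end

section
/- Let K > 0 and R ≥ 1. Suppose u : ℝ² → ℝ is continuously differentiable on {x ∈ ℝ² : |x| ≥ R} and satisfies |⟨x, ∇u(x)⟩ − u(x)| ≤ K/|x| for all |x| ≥ R. Then for every unit vector ω ∈ S¹ the limit c(ω) := lim_{r→∞} u(rω)/r exists, the function c : S¹ → ℝ is continuous, and for all r ≥ R and all ω ∈ S¹ one has |u(rω) − c(ω)·r| ≤ K/(2r). -/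
open Metric Filter Topology Set

/-!
Along a ray, `g(t) = u(tω)/t` satisfies `g'(t) = (⟨x, ∇u(x)⟩ - u(x))/t²` at `x = tω`, so
`|g'(t)| ≤ K/t³ = -m'(t)` with `m(t) = K/(2t²)`. Hence `g - m` increases and `g + m` decreases
on `[R, ∞)`, which traps `g(t) - g(s)` in `[m(t) - m(s), m(s) - m(t)]`: `g` is Cauchy at infinity
and stays within `m(r)` of its limit `c(ω)`. This rate does not depend on `ω`, so `c` is a uniform
limit of the continuous functions `ω ↦ u(rω)/r`.
-/

theorem abs_sub_le_sub_of_abs_deriv_le_neg_deriv {g m g' m' : ℝ → ℝ} {a : ℝ}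
    (hgc : ContinuousOn g (Ici a)) (hmc : ContinuousOn m (Ici a))
    (hg : ∀ t, a < t → HasDerivAt g (g' t) t) (hm : ∀ t, a < t → HasDerivAt m (m' t) t)
    (hbound : ∀ t, a < t → |g' t| ≤ -m' t) {s t : ℝ} (hs : a ≤ s) (hst : s ≤ t) :
    |g t - g s| ≤ m s - m t := by
  have hmono : MonotoneOn (g - m) (Ici a) := by
    refine monotoneOn_of_hasDerivWithinAt_nonneg (f' := g' - m') (convex_Ici a) (hgc.sub hmc)
      ?_ ?_ <;> simp only [interior_Ici, mem_Ioi]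
    · exact fun t ht => ((hg t ht).sub (hm t ht)).hasDerivWithinAt
    · exact fun t ht => show 0 ≤ g' t - m' t by linarith [hbound t ht, neg_abs_le (g' t)]
  have hanti : AntitoneOn (g + m) (Ici a) := by
    refine antitoneOn_of_hasDerivWithinAt_nonpos (f' := g' + m') (convex_Ici a) (hgc.add hmc)
      ?_ ?_ <;> simp only [interior_Ici, mem_Ioi]
    · exact fun t ht => ((hg t ht).add (hm t ht)).hasDerivWithinAt
    · exact fun t ht => show g' t + m' t ≤ 0 by linarith [hbound t ht, le_abs_self (g' t)]
  have h₁ := hmono hs (hs.trans hst) hst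
  have h₂ := hanti hs (hs.trans hst) hst
  simp only [Pi.sub_apply, Pi.add_apply] at h₁ h₂
  rw [abs_sub_le_iff]
  constructor <;> linarith

theorem exists_tendsto_atTop_dist_le {X : Type*} [PseudoMetricSpace X] [CompleteSpace X]
    {g : ℝ → X} {m : ℝ → ℝ} {a : ℝ} (hm : Tendsto m atTop (𝓝 0))
    (h : ∀ s t, a ≤ s → s ≤ t → dist (g t) (g s) ≤ m s - m t) :
    ∃ L, Tendsto g atTop (𝓝 L) ∧ ∀ s, a ≤ s → dist L (g s) ≤ m s := by
  have hcauchy : CauchySeq g := by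
    refine Metric.cauchySeq_iff'.2 fun ε hε => ?_
    obtain ⟨N, hN⟩ := eventually_atTop.1
      ((hm.eventually (Metric.ball_mem_nhds 0 (half_pos hε))).and (eventually_ge_atTop a))
    refine ⟨N, fun n hn => ?_⟩
    have hmN := abs_lt.1 (by simpa using (hN N le_rfl).1)
    have hmn := abs_lt.1 (by simpa using (hN n hn).1)
    linarith [h N n (hN N le_rfl).2 hn]
  obtain ⟨L, hL⟩ := cauchySeq_tendsto_of_complete hcauchy
  refine ⟨L, hL, fun s hs => ?_⟩
  have hlim : Tendsto (fun t => m s - m t) atTop (𝓝 (m s)) := by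
    simpa using tendsto_const_nhds.sub hm
  exact le_of_tendsto_of_tendsto (hL.dist tendsto_const_nhds) hlim
    (eventually_atTop.2 ⟨s, fun t hst => h s t hs hst⟩)

theorem continuousOn_of_eventually_dist_le {ι X Y : Type*} [TopologicalSpace X]
    [PseudoMetricSpace Y] {l : Filter ι} [l.NeBot] {F : ι → X → Y} {f : X → Y} {s : Set X}
    {m : ι → ℝ} (hF : ∀ᶠ i in l, ContinuousOn (F i) s) (hm : Tendsto m l (𝓝 0))
    (hdist : ∀ᶠ i in l, ∀ x ∈ s, dist (F i x) (f x) ≤ m i) : ContinuousOn f s := by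
  refine TendstoUniformlyOn.continuousOn (Metric.tendstoUniformlyOn_iff.2 fun ε hε => ?_)
    hF.frequently
  filter_upwards [hdist, hm.eventually (gt_mem_nhds hε)] with i hi hmi x hx
  rw [dist_comm]
  exact (hi x hx).trans_lt hmi

theorem hasDerivAt_div_two_mul_sq (K : ℝ) {t : ℝ} (ht : t ≠ 0) :
    HasDerivAt (fun t : ℝ => K / (2 * t ^ 2)) (-(K / t ^ 3)) t := by
  refine ((hasDerivAt_const t K).div ((hasDerivAt_pow 2 t).const_mul 2)
    (by positivity)).congr_deriv ?_
  field_simp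
  ring

theorem tendsto_div_two_mul_sq_atTop (K : ℝ) :
    Tendsto (fun t : ℝ => K / (2 * t ^ 2)) atTop (𝓝 0) :=
  tendsto_const_nhds.div_atTop ((tendsto_pow_atTop two_ne_zero).const_mul_atTop two_pos)

section Ray

variable {E : Type*} [NormedAddCommGroup E] [InnerProductSpace ℝ E] [CompleteSpace E]
  {u : E → ℝ}

theorem hasDerivAt_apply_smul_div {w : E} {r : ℝ} (hu : DifferentiableAt ℝ u (r • w))
    (hr : r ≠ 0) :
    HasDerivAt (fun t : ℝ => u (t • w) / t)
      ((inner ℝ (r • w) (gradient u (r • w)) - u (r • w)) / r ^ 2) r := by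
  have hsmul : HasDerivAt (fun t : ℝ => t • w) w r := by
    simpa using (hasDerivAt_id r).smul_const w
  have hline : HasDerivAt (fun t : ℝ => u (t • w)) (inner ℝ (gradient u (r • w)) w) r := by
    simpa only [Function.comp_def, InnerProductSpace.toDual_apply_apply] using
      hu.hasGradientAt.hasFDerivAt.comp_hasDerivAt r hsmul
  refine (hline.div (hasDerivAt_id r) hr).congr_deriv ?_
  rw [real_inner_smul_left, real_inner_comm, id, mul_one, mul_comm]

theorem exists_tendsto_apply_smul_div {K R : ℝ} (hR : 0 < R)
    (hreg : ContDiffOn ℝ 1 u {x | R ≤ ‖x‖})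
    (hder : ∀ x, R ≤ ‖x‖ → |inner ℝ x (gradient u x) - u x| ≤ K / ‖x‖)
    {w : E} (hw : ‖w‖ = 1) :
    ∃ c, Tendsto (fun r : ℝ => u (r • w) / r) atTop (𝓝 c) ∧
      ∀ r, R ≤ r → |u (r • w) / r - c| ≤ K / (2 * r ^ 2) := by
  have hnorm : ∀ t : ℝ, 0 ≤ t → ‖t • w‖ = t := fun t ht => by
    rw [norm_smul, hw, mul_one, Real.norm_of_nonneg ht]
  have hcont : ContinuousOn (fun t : ℝ => u (t • w) / t) (Ici R) :=
    (hreg.continuousOn.comp (continuous_id.smul continuous_const).continuousOn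
      fun t (ht : R ≤ t) => by simpa [hnorm t (hR.le.trans ht)]).div continuousOn_id
      fun t (ht : R ≤ t) => (hR.trans_le ht).ne'
  have hderiv : ∀ t, R < t → HasDerivAt (fun t : ℝ => u (t • w) / t)
      ((inner ℝ (t • w) (gradient u (t • w)) - u (t • w)) / t ^ 2) t := by
    intro t ht
    have hnhds : {x : E | R ≤ ‖x‖} ∈ 𝓝 (t • w) :=
      continuous_norm.continuousAt.eventually
        (eventually_ge_nhds (show R < ‖t • w‖ by rwa [hnorm t (hR.trans ht).le]))
    exact hasDerivAt_apply_smul_div ((hreg.contDiffAt hnhds).differentiableAt one_ne_zero)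
      (hR.trans ht).ne'
  have hbound : ∀ t, R < t →
      |(inner ℝ (t • w) (gradient u (t • w)) - u (t • w)) / t ^ 2| ≤ K / t ^ 3 := by
    intro t ht
    have ht0 : 0 < t := hR.trans ht
    have h := hder (t • w) (by rw [hnorm t ht0.le]; exact ht.le)
    rw [hnorm t ht0.le] at h
    rw [abs_div, abs_of_pos (by positivity : (0 : ℝ) < t ^ 2)]
    calc _ ≤ K / t / t ^ 2 := by gcongr
      _ = K / t ^ 3 := by ring
  obtain ⟨c, hc, hdist⟩ := exists_tendsto_atTop_dist_le (g := fun t : ℝ => u (t • w) / t)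
    (tendsto_div_two_mul_sq_atTop K) fun s t hs hst =>
    (Real.dist_eq _ _).trans_le <| abs_sub_le_sub_of_abs_deriv_le_neg_deriv hcont
      (fun t (ht : R ≤ t) =>
        (hasDerivAt_div_two_mul_sq K (hR.trans_le ht).ne').continuousAt.continuousWithinAt)
      hderiv (fun t ht => hasDerivAt_div_two_mul_sq K (hR.trans ht).ne')
      (fun t ht => (neg_neg (K / t ^ 3)).symm ▸ hbound t ht) hs hst
  exact ⟨c, hc, fun r hr => by simpa [Real.dist_eq, abs_sub_comm] using hdist r hr⟩

end Ray

theorem stmt_1_general (K R : ℝ) (hR : 1 ≤ R)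
    (u : EuclideanSpace ℝ (Fin 2) → ℝ)
    (hreg : ContDiffOn ℝ 1 u {x : EuclideanSpace ℝ (Fin 2) | R ≤ ‖x‖})
    (hder : ∀ x : EuclideanSpace ℝ (Fin 2), R ≤ ‖x‖ →
      |(inner ℝ x (gradient u x) : ℝ) - u x| ≤ K / ‖x‖) :
    ∃ c : EuclideanSpace ℝ (Fin 2) → ℝ,
      ContinuousOn c (sphere (0 : EuclideanSpace ℝ (Fin 2)) 1) ∧
      (∀ w : EuclideanSpace ℝ (Fin 2), ‖w‖ = 1 →
        Tendsto (fun r : ℝ => u (r • w) / r) atTop (nhds (c w))) ∧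
      (∀ r : ℝ, R ≤ r → ∀ w : EuclideanSpace ℝ (Fin 2), ‖w‖ = 1 →
        |u (r • w) - c w * r| ≤ K / (2 * r)) := by
  have hR₀ : 0 < R := one_pos.trans_le hR
  choose! c hlim hbound using fun w (hw : ‖w‖ = 1) =>
    exists_tendsto_apply_smul_div hR₀ hreg hder hw
  refine ⟨c, ?_, hlim, fun r hr w hw => ?_⟩
  · refine continuousOn_of_eventually_dist_le (l := atTop) (m := fun r => K / (2 * r ^ 2))
      (F := fun r w => u (r • w) / r) ?_ (tendsto_div_two_mul_sq_atTop K) ?_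
    · filter_upwards [eventually_ge_atTop R] with r hr
      refine (hreg.continuousOn.comp (continuous_const_smul r).continuousOn
        fun w hw => ?_).div_const r
      rw [mem_sphere_zero_iff_norm] at hw
      simpa [norm_smul_of_nonneg (hR₀.le.trans hr), hw] using hr
    · filter_upwards [eventually_ge_atTop R] with r hr w hw
      exact hbound w (by simpa using hw) r hr
  · have hr₀ : 0 < r := hR₀.trans_le hr
    calc |u (r • w) - c w * r| = |u (r • w) / r - c w| * r := by
          rw [← abs_of_pos hr₀, ← abs_mul, abs_of_pos hr₀, sub_mul, div_mul_cancel₀ _ hr₀.ne']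
      _ ≤ K / (2 * r ^ 2) * r := by gcongr; exact hbound w hw r hr
      _ = K / (2 * r) := by field_simp

/-- **Radial integration step in the model problem** (from the proof of Lemma 1.4).
If `u : ℝ² → ℝ` is `C¹` on `{|x| ≥ R}` and `|⟨x, ∇u(x)⟩ − u(x)| ≤ K/|x|` there, then for
every unit vector `ω` the limit `c(ω) = lim_{r→∞} u(rω)/r` exists, `c` is continuous on the
unit circle, and `|u(rω) − c(ω) r| ≤ K/(2r)` for all `r ≥ R`. -/
theorem stmt_1 (K R : ℝ) (hK : 0 < K) (hR : 1 ≤ R)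
    (u : EuclideanSpace ℝ (Fin 2) → ℝ)
    (hreg : ContDiffOn ℝ 1 u {x : EuclideanSpace ℝ (Fin 2) | R ≤ ‖x‖})
    (hder : ∀ x : EuclideanSpace ℝ (Fin 2), R ≤ ‖x‖ →
      |(inner ℝ x (gradient u x) : ℝ) - u x| ≤ K / ‖x‖) :
    ∃ c : EuclideanSpace ℝ (Fin 2) → ℝ,
      ContinuousOn c (sphere (0 : EuclideanSpace ℝ (Fin 2)) 1) ∧
      (∀ w : EuclideanSpace ℝ (Fin 2), ‖w‖ = 1 →
        Tendsto (fun r : ℝ => u (r • w) / r) atTop (nhds (c w))) ∧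
      (∀ r : ℝ, R ≤ r → ∀ w : EuclideanSpace ℝ (Fin 2), ‖w‖ = 1 →
        |u (r • w) - c w * r| ≤ K / (2 * r)) :=
  stmt_1_general K R hR u hreg hder
end

section
/- Let n ≥ 1 and k ≥ 1 be integers and set a = k/(k + n). There is a constant C = C(k, n) such that for every r > 0 and every C^k function u on the ball B_{2r} ⊂ ℝ^n of radius 2r, one has ‖u‖_{L^∞(B_r)} ≤ C ( r^{−n} ‖u‖_{L¹(B_{2r})} + ‖u‖_{L¹(B_{2r})}^{a} ‖∇^k u‖_{L^∞(B_{2r})}^{1−a} ), where B_r is the concentric ball of radius r. -/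
/-!
Write `u x = ± Δ_h^k u (x) + ∑_{i=1}^k ± (k choose i) u (x + i h)`. The `k`-th forward
difference is at most `B ‖h‖^k` by the mean value theorem applied `k` times, and averaging the
remaining terms over `h ∈ B_ρ` bounds them by `2^k ‖u‖_{L¹(B_{2r})} / |B_ρ|`. Hence
`|u x| ≤ B ρ^k + 2^k ‖u‖_{L¹} / (|B_1| ρ^n)` for every `ρ ≤ r/k`. Choosing
`ρ = (‖u‖_{L¹}/B)^{1/(k+n)}`, which balances the two terms, when this is at most `r/k`, and
`ρ = r/k` otherwise, gives the two terms of the estimate.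
-/

open Metric MeasureTheory Finset fwdDiff

section FwdDiff

variable {E F : Type*} [NormedAddCommGroup E] [NormedSpace ℝ E]
  [NormedAddCommGroup F] [NormedSpace ℝ F]

theorem Convex.add_nsmul_mem {s : Set E} (hs : Convex ℝ s) {x h : E} {i n : ℕ} (hx : x ∈ s)
    (hxn : x + n • h ∈ s) (hin : i ≤ n) : x + i • h ∈ s := by
  rcases Nat.eq_zero_or_pos n with rfl | hn
  · simpa [Nat.le_zero.mp hin] using hx
  have hmem := hs.add_smul_mem hx hxn (t := (i : ℝ) / n) ⟨by positivity,
    div_le_one_of_le₀ (by exact_mod_cast hin) n.cast_nonneg⟩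
  rwa [← Nat.cast_smul_eq_nsmul ℝ n, smul_smul, div_mul_cancel₀ _ (by positivity),
    Nat.cast_smul_eq_nsmul] at hmem

theorem norm_fwdDiff_iter_le {s : Set E} (hs : IsOpen s) (hsc : Convex ℝ s) {j : ℕ}
    {f : E → F} (hf : ContDiffOn ℝ j f s) {M : ℝ}
    (hM : ∀ y ∈ s, ‖iteratedFDeriv ℝ j f y‖ ≤ M) {x h : E} (hx : x ∈ s)
    (hxj : x + j • h ∈ s) : ‖(Δ_[h])^[j] f x‖ ≤ M * ‖h‖ ^ j := by
  induction j generalizing s f M with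
  | zero => simpa using hM x hx
  | succ j ih =>
    set s' := s ∩ (fun z ↦ h + z) ⁻¹' s
    have hs' : IsOpen s' := hs.inter (hs.preimage (continuous_const.add continuous_id))
    have hsc' : Convex ℝ s' := hsc.inter (hsc.translate_preimage_right h)
    have hmem : ∀ i ≤ j + 1, x + i • h ∈ s := fun i hi ↦ hsc.add_nsmul_mem hx hxj hi
    have hshift : ∀ i ≤ j, x + i • h ∈ s' := fun i hi ↦
      ⟨hmem i (by omega), by simpa [add_left_comm, succ_nsmul'] using hmem (i + 1) (by omega)⟩
    have hΔ : ContDiffOn ℝ j (Δ_[h] f) s' :=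
      ((hf.of_le (by norm_cast; omega)).comp (contDiff_id.add contDiff_const).contDiffOn
        fun z hz ↦ by simpa [add_comm] using hz.2).sub
        ((hf.of_le (by norm_cast; omega)).mono Set.inter_subset_left)
    have hDf : ∀ y ∈ s, ContDiffAt ℝ (j + 1 : ℕ) f y :=
      fun y hy ↦ hf.contDiffAt (hs.mem_nhds hy)
    have hMΔ : ∀ y ∈ s', ‖iteratedFDeriv ℝ j (Δ_[h] f) y‖ ≤ M * ‖h‖ := by
      intro y hy
      have hyh : y + h ∈ s := by simpa [add_comm] using hy.2
      have hderiv : iteratedFDeriv ℝ j (Δ_[h] f) y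
          = iteratedFDeriv ℝ j f (y + h) - iteratedFDeriv ℝ j f y := by
        rw [show Δ_[h] f = fun z ↦ f (z + h) - f z from rfl, fun_iteratedFDeriv_sub_apply,
          iteratedFDeriv_comp_add_right]
        · exact ((hDf _ hyh).comp y (contDiffAt_id.add contDiffAt_const)).of_le
            (by norm_cast; omega)
        · exact (hDf y hy.1).of_le (by norm_cast; omega)
      rw [hderiv]
      simpa using hsc.norm_image_sub_le_of_norm_fderiv_le
        (fun z hz ↦ (hDf z hz).differentiableAt_iteratedFDeriv (by norm_cast; omega))
        (fun z hz ↦ (norm_fderiv_iteratedFDeriv).trans_le (hM z hz)) hy.1 hyh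
    rw [Function.iterate_succ_apply, pow_succ', ← mul_assoc]
    exact ih hs' hsc' hΔ hMΔ (by simpa using hshift 0 (by omega)) (hshift j le_rfl)

end FwdDiff

theorem norm_le_norm_fwdDiff_iter_add_sum {M G : Type*} [AddCommMonoid M]
    [SeminormedAddCommGroup G] (f : M → G) (h y : M) (n : ℕ) :
    ‖f y‖ ≤ ‖(Δ_[h])^[n] f y‖
      + ∑ i ∈ range n, (n.choose (i + 1) : ℝ) * ‖f (y + (i + 1) • h)‖ := by
  rw [fwdDiff_iter_eq_sum_shift, sum_range_succ']
  set S :=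
    ∑ i ∈ range n, ((-1 : ℤ) ^ (n - (i + 1)) * n.choose (i + 1)) • f (y + (i + 1) • h)
  have hS : ‖S‖ ≤ ∑ i ∈ range n, (n.choose (i + 1) : ℝ) * ‖f (y + (i + 1) • h)‖ := by
    refine (norm_sum_le _ _).trans (sum_le_sum fun i _ ↦ (norm_zsmul_le _ _).trans ?_)
    simp
  have hy : ‖f y‖ = ‖((-1 : ℤ) ^ n * n.choose 0) • f (y + (0 : ℕ) • h)‖ := by
    rcases neg_one_pow_eq_or ℤ n with hn | hn <;> simp [hn]
  calc ‖f y‖ = ‖(S + ((-1 : ℤ) ^ n * n.choose 0) • f (y + (0 : ℕ) • h)) - S‖ := by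
        rw [hy, add_sub_cancel_left]
    _ ≤ _ := (norm_sub_le _ _).trans (by simpa using hS)

section Haar

variable {E : Type*} [NormedAddCommGroup E] [NormedSpace ℝ E] [FiniteDimensional ℝ E]
  [MeasurableSpace E] [BorelSpace E] (μ : Measure E) [μ.IsAddHaarMeasure]

theorem setIntegral_comp_add_smul_le_integral {g : E → ℝ} (hg : Integrable g μ) (hg0 : 0 ≤ g)
    (s : Set E) (x : E) {c : ℝ} (hc : 1 ≤ c) :
    ∫ h in s, g (x + c • h) ∂μ ≤ ∫ z, g z ∂μ := by
  calc ∫ h in s, g (x + c • h) ∂μ ≤ ∫ h, g (x + c • h) ∂μ :=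
        setIntegral_le_integral ((hg.comp_add_left x).comp_smul (by positivity))
          (.of_forall fun h ↦ hg0 (x + c • h))
    _ = (c ^ Module.finrank ℝ E)⁻¹ * ∫ z, g z ∂μ := by
        rw [Measure.integral_comp_smul_of_nonneg μ (fun z ↦ g (x + z)) c (hR := by positivity),
          integral_add_left_eq_self, smul_eq_mul]
    _ ≤ ∫ z, g z ∂μ :=
        mul_le_of_le_one_left (integral_nonneg hg0) (inv_le_one_of_one_le₀ (one_le_pow₀ hc))

theorem sum_range_choose_succ_le (n : ℕ) : ∑ i ∈ range n, n.choose (i + 1) ≤ 2 ^ n := by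
  have := n.sum_range_choose
  rw [sum_range_succ'] at this
  omega

theorem measureReal_mul_le_of_forall_le {s : Set E} (hs : MeasurableSet s) (hμs : μ s ≠ ⊤)
    {g : E → ℝ} (hg : Integrable g μ) (hg0 : 0 ≤ g) {x : E} {A v : ℝ} {n : ℕ}
    (hv : ∀ h ∈ s,
      v ≤ A + ∑ i ∈ range n, (n.choose (i + 1) : ℝ) * g (x + ((i + 1 : ℕ) : ℝ) • h)) :
    μ.real s * v ≤ μ.real s * A + 2 ^ n * ∫ z, g z ∂μ := by
  have hint : ∀ i ∈ range n, Integrable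
      (fun h ↦ (n.choose (i + 1) : ℝ) * g (x + ((i + 1 : ℕ) : ℝ) • h)) (μ.restrict s) :=
    fun i _ ↦ (((hg.comp_add_left x).comp_smul (by positivity)).const_mul _).integrableOn
  calc μ.real s * v = ∫ _ in s, v ∂μ := by rw [setIntegral_const, smul_eq_mul]
    _ ≤ ∫ h in s, (A + ∑ i ∈ range n,
          (n.choose (i + 1) : ℝ) * g (x + ((i + 1 : ℕ) : ℝ) • h)) ∂μ :=
        setIntegral_mono_on (integrableOn_const hμs)
          ((integrableOn_const hμs).add (integrable_finsetSum _ hint)) hs hv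
    _ = μ.real s * A + ∑ i ∈ range n,
          (n.choose (i + 1) : ℝ) * ∫ h in s, g (x + ((i + 1 : ℕ) : ℝ) • h) ∂μ := by
        rw [integral_add (integrableOn_const hμs (C := A)) (integrable_finsetSum _ hint),
          integral_finsetSum _ hint, setIntegral_const, smul_eq_mul]
        simp only [integral_const_mul]
    _ ≤ μ.real s * A + ∑ i ∈ range n, (n.choose (i + 1) : ℝ) * ∫ z, g z ∂μ := by
        gcongr with i
        exact setIntegral_comp_add_smul_le_integral μ hg hg0 s x (by simp)
    _ ≤ μ.real s * A + 2 ^ n * ∫ z, g z ∂μ := by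
        rw [← sum_mul]
        gcongr
        · exact integral_nonneg hg0
        · exact_mod_cast sum_range_choose_succ_le n

end Haar

section LocalEstimate

variable {E F : Type*} [NormedAddCommGroup E] [NormedSpace ℝ E] [FiniteDimensional ℝ E]
  [MeasurableSpace E] [BorelSpace E] (μ : Measure E) [μ.IsAddHaarMeasure]
  [NormedAddCommGroup F] [NormedSpace ℝ F]

theorem norm_le_of_norm_iteratedFDeriv_le {k : ℕ} {r ρ : ℝ} (hρ : 0 < ρ) (hρr : k * ρ ≤ r)
    {u : E → F} (hu : ContDiffOn ℝ k u (ball 0 (2 * r)))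
    (hint : IntegrableOn u (ball 0 (2 * r)) μ) {B : ℝ} (hB : 0 ≤ B)
    (hDB : ∀ y ∈ ball (0 : E) (2 * r), ‖iteratedFDeriv ℝ k u y‖ ≤ B) {x : E}
    (hx : x ∈ ball (0 : E) r) :
    ‖u x‖ ≤ B * ρ ^ k + 2 ^ k / μ.real (ball 0 1)
      * ((∫ y in ball (0 : E) (2 * r), ‖u y‖ ∂μ) / ρ ^ Module.finrank ℝ E) := by
  set g := (ball (0 : E) (2 * r)).indicator (fun y ↦ ‖u y‖) with hgdef
  have hg : Integrable g μ := (integrable_indicator_iff measurableSet_ball).2 hint.norm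
  have hg0 : 0 ≤ g := fun y ↦ Set.indicator_nonneg (fun _ _ ↦ norm_nonneg _) y
  have hmem : ∀ h ∈ ball (0 : E) ρ, ∀ t : ℝ, 0 ≤ t → t ≤ k →
      x + t • h ∈ ball (0 : E) (2 * r) := by
    intro h hh t ht htk
    rw [mem_ball_zero_iff] at hh hx ⊢
    calc ‖x + t • h‖ ≤ ‖x‖ + t * ‖h‖ :=
          (norm_add_le _ _).trans_eq (by rw [norm_smul, Real.norm_of_nonneg ht])
      _ < r + k * ρ :=
          add_lt_add_of_lt_of_le hx (mul_le_mul htk hh.le (norm_nonneg _) k.cast_nonneg)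
      _ ≤ 2 * r := by linarith
  have hpt : ∀ h ∈ ball (0 : E) ρ, ‖u x‖ ≤ B * ρ ^ k
      + ∑ i ∈ range k, (k.choose (i + 1) : ℝ) * g (x + ((i + 1 : ℕ) : ℝ) • h) := by
    intro h hh
    have hΔ := norm_fwdDiff_iter_le isOpen_ball (convex_ball _ _) hu hDB
      (by simpa using hmem h hh 0 le_rfl k.cast_nonneg)
      (by simpa [Nat.cast_smul_eq_nsmul] using hmem h hh k k.cast_nonneg le_rfl)
    refine (norm_le_norm_fwdDiff_iter_add_sum u h x k).trans
      (add_le_add (hΔ.trans ?_) (sum_le_sum fun i hi ↦ ?_))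
    · gcongr
      exact (mem_ball_zero_iff.mp hh).le
    · have hik : ((i + 1 : ℕ) : ℝ) ≤ k := by exact_mod_cast mem_range.mp hi
      rw [hgdef, Set.indicator_of_mem (hmem h hh _ (by positivity) hik), Nat.cast_smul_eq_nsmul]
  have hball : μ.real (ball (0 : E) ρ) = ρ ^ Module.finrank ℝ E * μ.real (ball 0 1) := by
    rw [measureReal_def, measureReal_def, Measure.addHaar_ball_of_pos μ 0 hρ,
      ENNReal.toReal_mul, ENNReal.toReal_ofReal (by positivity)]
  have hω : 0 < μ.real (ball (0 : E) 1) :=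
    ENNReal.toReal_pos (measure_ball_pos μ 0 one_pos).ne' measure_ball_lt_top.ne
  have havg := measureReal_mul_le_of_forall_le μ measurableSet_ball measure_ball_lt_top.ne
    hg hg0 hpt
  rw [integral_indicator measurableSet_ball, hball] at havg
  rw [div_mul_div_comm, ← sub_le_iff_le_add', le_div_iff₀' (by positivity)]
  linarith

end LocalEstimate

open Filter Topology in
theorem le_of_forall_le_mul_pow_add_div_pow {k n : ℕ} (hk : 0 < k) {X B I c R : ℝ}
    (hB : 0 ≤ B) (hI : 0 ≤ I) (hc : 0 ≤ c) (hR : 0 < R)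
    (hX : ∀ ρ, 0 < ρ → ρ ≤ R → X ≤ B * ρ ^ k + c * (I / ρ ^ n)) :
    X ≤ (1 + c) * (I / R ^ n + I ^ ((k : ℝ) / (k + n)) * B ^ (1 - (k : ℝ) / (k + n))) := by
  set a : ℝ := k / (k + n) with ha
  have hkn : (0 : ℝ) < k + n := by positivity
  have hrhs : 0 ≤ I ^ a * B ^ (1 - a) := by positivity
  by_cases hlarge : B * R ^ (k + n) ≤ I
  · have hBR : B * R ^ k ≤ I / R ^ n := by
      rw [le_div_iff₀ (by positivity), mul_assoc, ← pow_add]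
      exact hlarge
    calc X ≤ B * R ^ k + c * (I / R ^ n) := hX R hR le_rfl
      _ ≤ (1 + c) * (I / R ^ n) := by linarith
      _ ≤ _ := by gcongr; linarith
  push Not at hlarge
  have hBpos : 0 < B := pos_of_mul_pos_left (hI.trans_lt hlarge) (by positivity)
  rcases hI.eq_or_lt with rfl | hIpos
  · -- with `I = 0` the bound `X ≤ B ρ ^ k` holds for all small `ρ`, so `X ≤ 0`
    have hlim : Tendsto (fun ρ : ℝ ↦ B * ρ ^ k) (𝓝[>] 0) (𝓝 0) := by
      have : Continuous fun ρ : ℝ ↦ B * ρ ^ k := by fun_prop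
      simpa [hk.ne'] using (this.tendsto 0).mono_left nhdsWithin_le_nhds
    have hX0 : X ≤ 0 := ge_of_tendsto hlim <| by
      filter_upwards [Ioo_mem_nhdsGT hR] with ρ hρ
      simpa using hX ρ hρ.1 hρ.2.le
    simpa [Real.zero_rpow (by positivity : a ≠ 0)] using hX0
  -- otherwise the two terms balance at `ρ = t` with `t ^ (k + n) = I / B`
  set t : ℝ := (I / B) ^ ((k + n : ℝ)⁻¹)
  have ht : 0 < t := by positivity
  have htkn : t ^ (k + n) = I / B := by
    rw [← Real.rpow_natCast, ← Real.rpow_mul (by positivity)]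
    push_cast
    rw [inv_mul_cancel₀ hkn.ne', Real.rpow_one]
  have htR : t ≤ R := by
    refine (pow_lt_pow_iff_left₀ ht.le hR.le (by omega : k + n ≠ 0)).mp ?_ |>.le
    rwa [htkn, div_lt_iff₀ hBpos, mul_comm]
  have hBt : B * t ^ k = I ^ a * B ^ (1 - a) := by
    have : t ^ k = (I / B) ^ a := by
      rw [← Real.rpow_natCast, ← Real.rpow_mul (by positivity), ha]
      field_simp
    rw [this, Real.div_rpow hI hBpos.le, Real.rpow_sub hBpos, Real.rpow_one]
    field_simp
  have hIt : I / t ^ n = B * t ^ k := by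
    rw [div_eq_iff (by positivity), mul_assoc, ← pow_add, htkn]
    field_simp
  calc X ≤ B * t ^ k + c * (I / t ^ n) := hX t ht htR
    _ = (1 + c) * (I ^ a * B ^ (1 - a)) := by rw [hIt, hBt]; ring
    _ ≤ _ := mul_le_mul_of_nonneg_left (le_add_of_nonneg_left (by positivity)) (by positivity)

theorem stmt_5_general (n k : ℕ) (hk : 1 ≤ k) :
    ∃ C : ℝ, 0 < C ∧
      ∀ r : ℝ, 0 < r →
        ∀ u : EuclideanSpace ℝ (Fin n) → ℝ,
          ContDiffOn ℝ k u (ball (0 : EuclideanSpace ℝ (Fin n)) (2 * r)) →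
          IntegrableOn u (ball (0 : EuclideanSpace ℝ (Fin n)) (2 * r)) →
          ∀ B : ℝ, 0 ≤ B →
            (∀ x ∈ ball (0 : EuclideanSpace ℝ (Fin n)) (2 * r),
              ‖iteratedFDerivWithin ℝ k u (ball (0 : EuclideanSpace ℝ (Fin n)) (2 * r)) x‖
                ≤ B) →
            ∀ x ∈ ball (0 : EuclideanSpace ℝ (Fin n)) r,
              |u x| ≤ C * (r ^ (-(n : ℝ))
                    * (∫ y in ball (0 : EuclideanSpace ℝ (Fin n)) (2 * r), |u y|)
                  + (∫ y in ball (0 : EuclideanSpace ℝ (Fin n)) (2 * r), |u y|)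
                      ^ ((k : ℝ) / ((k : ℝ) + n))
                    * B ^ (1 - (k : ℝ) / ((k : ℝ) + n))) := by
  set c : ℝ := 2 ^ k / volume.real (ball (0 : EuclideanSpace ℝ (Fin n)) 1)
  have hc : 0 < c := div_pos (by positivity) (ENNReal.toReal_pos
    (measure_ball_pos volume 0 one_pos).ne' measure_ball_lt_top.ne)
  refine ⟨(1 + c) * (k ^ n + 1), by positivity, fun r hr u hu hint B hB hDB x hx ↦ ?_⟩
  set I := ∫ y in ball (0 : EuclideanSpace ℝ (Fin n)) (2 * r), |u y|
  have hk' : (0 : ℝ) < k := by exact_mod_cast hk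
  have hlocal : ∀ ρ, 0 < ρ → ρ ≤ r / k → |u x| ≤ B * ρ ^ k + c * (I / ρ ^ n) := by
    intro ρ hρ hρr
    simpa [finrank_euclideanSpace_fin] using
      norm_le_of_norm_iteratedFDeriv_le (volume : Measure (EuclideanSpace ℝ (Fin n))) hρ
        (by rwa [le_div_iff₀' hk'] at hρr) hu hint hB
        (fun y hy ↦ by rw [← iteratedFDerivWithin_of_isOpen k isOpen_ball hy]; exact hDB y hy) hx
  have hrk : I / (r / k) ^ n = k ^ n * (r ^ (-(n : ℝ)) * I) := by
    rw [Real.rpow_neg hr.le, Real.rpow_natCast, div_pow]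
    field_simp
  have hI : 0 ≤ I := integral_nonneg fun y ↦ abs_nonneg _
  calc |u x| ≤ (1 + c) * (I / (r / k) ^ n
          + I ^ ((k : ℝ) / (k + n)) * B ^ (1 - (k : ℝ) / (k + n))) :=
        le_of_forall_le_mul_pow_add_div_pow hk hB hI hc.le (by positivity) hlocal
    _ ≤ _ := by
        rw [hrk, mul_assoc]
        gcongr
        have : 0 ≤ r ^ (-(n : ℝ)) * I := by positivity
        have : 0 ≤ I ^ ((k : ℝ) / (k + n)) * B ^ (1 - (k : ℝ) / (k + n)) := by positivity
        nlinarith [one_le_pow₀ (M₀ := ℝ) (n := n) (by exact_mod_cast hk : (1 : ℝ) ≤ k)]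

/-- **`L¹`–`C^k` interpolation inequality** (Lemma B.2, first inequality): with
`a = k/(k+n)` there is `C = C(k,n)` such that for every `r > 0` and every `C^k` function
`u` on `B_{2r} ⊆ ℝⁿ`,
`‖u‖_{L^∞(B_r)} ≤ C ( r^{−n} ‖u‖_{L¹(B_{2r})} + ‖u‖_{L¹(B_{2r})}^a ‖∇^k u‖_{L^∞(B_{2r})}^{1−a} )`. -/
theorem stmt_5 (n k : ℕ) (hn : 1 ≤ n) (hk : 1 ≤ k) :
    ∃ C : ℝ, 0 < C ∧
      ∀ r : ℝ, 0 < r →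
        ∀ u : EuclideanSpace ℝ (Fin n) → ℝ,
          ContDiffOn ℝ k u (ball (0 : EuclideanSpace ℝ (Fin n)) (2 * r)) →
          IntegrableOn u (ball (0 : EuclideanSpace ℝ (Fin n)) (2 * r)) →
          ∀ B : ℝ, 0 ≤ B →
            (∀ x ∈ ball (0 : EuclideanSpace ℝ (Fin n)) (2 * r),
              ‖iteratedFDerivWithin ℝ k u (ball (0 : EuclideanSpace ℝ (Fin n)) (2 * r)) x‖
                ≤ B) →
            ∀ x ∈ ball (0 : EuclideanSpace ℝ (Fin n)) r,
              |u x| ≤ C * (r ^ (-(n : ℝ))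
                    * (∫ y in ball (0 : EuclideanSpace ℝ (Fin n)) (2 * r), |u y|)
                  + (∫ y in ball (0 : EuclideanSpace ℝ (Fin n)) (2 * r), |u y|)
                      ^ ((k : ℝ) / ((k : ℝ) + n))
                    * B ^ (1 - (k : ℝ) / ((k : ℝ) + n))) :=
  stmt_5_general n k hk
end

section
/- Let n ≥ 1 and λ₀ > 0, and let M ⊂ ℝ^{n+1} be a Borel set such that for every x₀ ∈ ℝ^{n+1} and every t₀ > 0 one has ∫_M (4πt₀)^{−n/2} exp(−|x − x₀|²/(4t₀)) dH^n(x) ≤ λ₀, where H^n is the n-dimensional Hausdorff measure on ℝ^{n+1}. Then there is a constant C = C(λ₀, n) such that H^n(M ∩ B_R(x)) ≤ C R^n for every R > 0 and every x ∈ ℝ^{n+1}, where B_R(x) is the open Euclidean ball of radius R centered at x. -/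
open Metric MeasureTheory

/-- **Entropy bounds imply polynomial area growth** (Lemma E.1): if `M ⊆ ℝ^{n+1}` is a Borel
set whose Gaussian areas at all centers `x₀` and scales `t₀ > 0` are bounded by `λ₀`, then
there is `C = C(λ₀, n)` with `H^n(M ∩ B_R(x)) ≤ C Rⁿ` for all `R > 0` and `x ∈ ℝ^{n+1}`. -/
theorem stmt_7 (n : ℕ) (hn : 1 ≤ n) (lam₀ : ℝ) (hlam₀ : 0 < lam₀)
    (M : Set (EuclideanSpace ℝ (Fin (n + 1)))) (hM : MeasurableSet M)
    (hent : ∀ (x₀ : EuclideanSpace ℝ (Fin (n + 1))) (t₀ : ℝ), 0 < t₀ →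
      (∫⁻ x in M, ENNReal.ofReal
          ((4 * Real.pi * t₀) ^ (-(n : ℝ) / 2) * Real.exp (-‖x - x₀‖ ^ 2 / (4 * t₀)))
        ∂(μH[(n : ℝ)])) ≤ ENNReal.ofReal lam₀) :
    ∃ C : ℝ, 0 < C ∧
      ∀ R : ℝ, 0 < R → ∀ x : EuclideanSpace ℝ (Fin (n + 1)),
        μH[(n : ℝ)] (M ∩ ball x R) ≤ ENNReal.ofReal (C * R ^ n) := by
  have hpi : (0:ℝ) < Real.pi := Real.pi_pos
  refine ⟨lam₀ * (4 * Real.pi) ^ ((n : ℝ) / 2) * Real.exp (1/4), by positivity, ?_⟩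
  intro R hR x
  have hb : (0:ℝ) < 4 * Real.pi * R ^ 2 := by positivity
  -- the constant lower bound for the Gaussian weight on the ball
  set c : ℝ := (4 * Real.pi * R ^ 2) ^ (-(n : ℝ) / 2) * Real.exp (-(1/4)) with hc
  have hcpos : 0 < c := by
    have := Real.rpow_pos_of_pos hb (-(n : ℝ) / 2)
    positivity
  have key := hent x (R ^ 2) (by positivity)
  -- restrict the integral to M ∩ ball x R
  have hsub : M ∩ ball x R ⊆ M := Set.inter_subset_left
  have h1 : (∫⁻ y in M ∩ ball x R, ENNReal.ofReal
        ((4 * Real.pi * R ^ 2) ^ (-(n : ℝ) / 2) * Real.exp (-‖y - x‖ ^ 2 / (4 * R ^ 2)))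
      ∂(μH[(n : ℝ)])) ≤ ENNReal.ofReal lam₀ :=
    le_trans (lintegral_mono_set hsub) key
  -- pointwise lower bound on the ball
  have h2 : ENNReal.ofReal c * μH[(n : ℝ)] (M ∩ ball x R) ≤ ENNReal.ofReal lam₀ := by
    refine le_trans ?_ h1
    rw [← setLIntegral_const]
    refine setLIntegral_mono' (hM.inter measurableSet_ball) ?_
    intro y hy
    refine ENNReal.ofReal_le_ofReal ?_
    have hdist : ‖y - x‖ < R := by
      have := hy.2
      rwa [mem_ball, dist_eq_norm] at this
    have hnn : (0:ℝ) ≤ ‖y - x‖ := norm_nonneg _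
    have hsq : ‖y - x‖ ^ 2 ≤ R ^ 2 := by nlinarith
    have hexp : Real.exp (-(1/4)) ≤ Real.exp (-‖y - x‖ ^ 2 / (4 * R ^ 2)) := by
      apply Real.exp_le_exp.mpr
      rw [neg_div, neg_le_neg_iff]
      rw [div_le_iff₀ (by positivity)]
      nlinarith
    have hbpos : (0:ℝ) ≤ (4 * Real.pi * R ^ 2) ^ (-(n : ℝ) / 2) :=
      (Real.rpow_pos_of_pos hb _).le
    calc c = (4 * Real.pi * R ^ 2) ^ (-(n : ℝ) / 2) * Real.exp (-(1/4)) := hc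
      _ ≤ _ := by gcongr
  -- divide by c
  have h3 : μH[(n : ℝ)] (M ∩ ball x R) ≤ ENNReal.ofReal lam₀ / ENNReal.ofReal c := by
    rw [ENNReal.le_div_iff_mul_le (Or.inl ((ENNReal.ofReal_pos.mpr hcpos).ne'))
      (Or.inl ENNReal.ofReal_ne_top)]
    rwa [mul_comm]
  refine h3.trans ?_
  rw [← ENNReal.ofReal_div_of_pos hcpos]
  apply ENNReal.ofReal_le_ofReal
  -- real computation
  have hrw : (4 * Real.pi * R ^ 2) ^ (-(n : ℝ) / 2)
      = ((4 * Real.pi) ^ ((n : ℝ) / 2) * R ^ n)⁻¹ := by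
    rw [neg_div, Real.rpow_neg hb.le]
    congr 1
    rw [Real.mul_rpow (by positivity) (by positivity)]
    congr 1
    rw [← Real.rpow_natCast R 2, ← Real.rpow_mul hR.le, ← Real.rpow_natCast R n]
    congr 1
    push_cast
    ring
  rw [hc, hrw]
  rw [Real.exp_neg]
  have hP : (0:ℝ) < (4 * Real.pi) ^ ((n : ℝ) / 2) * R ^ n := by positivity
  have hE : (0:ℝ) < Real.exp (1/4) := Real.exp_pos _
  field_simp
  ring_nf
  exact le_rfl
end

section
/- Let θ' ∈ (0, 1/2) and C > 0, and let F : [0, ∞) → [0, ∞) be differentiable with F'(τ) ≤ −C·F(τ)^{2(1−θ')} + C·e^{−2τ} for all τ ≥ 0. Then there exists a constant D > 0, depending only on F(0), C, and θ', such that F(τ) ≤ D·(1 + τ)^{−1/(1−2θ')} for all τ ≥ 0. -/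
/-!
Comparison with the barrier `G τ = D (1 + τ) ^ (-1/β)`, `β = 1 - 2θ'`. Since
`G ^ (1 + β) = D ^ (1 + β) (1 + τ) ^ (-1/β - 1)` decays at the same rate as `G'`, and `e^{-2τ}`
decays faster still, for `D` large the barrier is a strict supersolution of
`F' = -C F ^ (1 + β) + C e^{-2τ}`. Taking also `D ≥ F 0`, the graph of `F` cannot cross that
of `G`: at a first contact point `F' < G'`.
-/

open Set Real

theorem rpow_le_rpow_self_mul_exp_sub {a y : ℝ} (ha : 0 < a) (hy : 0 < y) :
    y ^ a ≤ a ^ a * exp (y - a) := by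
  have hlog : log y - log a ≤ y / a - 1 := by
    rw [← log_div hy.ne' ha.ne']
    exact log_le_sub_one_of_pos (div_pos hy ha)
  have hmul : a * log y ≤ a * log a + (y - a) := by
    have := mul_le_mul_of_nonneg_left hlog ha.le
    rw [mul_sub, mul_sub, mul_div_cancel₀ _ ha.ne', mul_one] at this
    linarith
  rw [rpow_def_of_pos hy, rpow_def_of_pos ha, ← exp_add, mul_comm (log y), mul_comm (log a)]
  exact exp_le_exp.mpr hmul

theorem exp_neg_mul_le_mul_one_add_rpow_neg {a κ s : ℝ} (ha : 0 < a) (hκ : 0 < κ)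
    (hs : -1 < s) : exp (-(κ * s)) ≤ (a / κ) ^ a * exp (κ - a) * (1 + s) ^ (-a) := by
  have h1s : 0 < 1 + s := by linarith
  have key := rpow_le_rpow_self_mul_exp_sub ha (mul_pos hκ h1s)
  rw [mul_rpow hκ.le h1s.le] at key
  rw [rpow_neg h1s.le, div_rpow ha.le hκ.le, ← div_eq_mul_inv, le_div_iff₀ (rpow_pos_of_pos h1s a),
    div_mul_eq_mul_div, le_div_iff₀ (rpow_pos_of_pos hκ a)]
  calc exp (-(κ * s)) * (1 + s) ^ a * κ ^ a = exp (-(κ * s)) * (κ ^ a * (1 + s) ^ a) := by ring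
    _ ≤ exp (-(κ * s)) * (a ^ a * exp (κ * (1 + s) - a)) := by gcongr
    _ = a ^ a * exp (κ - a) := by
      rw [mul_left_comm, ← exp_add]; ring_nf

theorem exists_add_mul_lt_rpow_one_add {β : ℝ} (hβ : 0 < β) (K L D₀ : ℝ) :
    ∃ D, D₀ ≤ D ∧ 1 ≤ D ∧ K + L * D < D ^ (1 + β) := by
  set N := |K| + |L| + 1
  have hN : 1 ≤ N := by simp only [N]; linarith [abs_nonneg K, abs_nonneg L]
  set D := max D₀ (N ^ (1 / β))
  have hD : 1 ≤ D := (one_le_rpow hN (by positivity)).trans (le_max_right _ _)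
  have hDβ : N ≤ D ^ β := by
    calc N = (N ^ (1 / β)) ^ β := by
          rw [← rpow_mul (by positivity), one_div_mul_cancel hβ.ne', rpow_one]
      _ ≤ D ^ β := by gcongr; exact le_max_right _ _
  refine ⟨D, le_max_left _ _, hD, ?_⟩
  rw [rpow_add (by positivity), rpow_one]
  have hDN : D * N ≤ D * D ^ β := mul_le_mul_of_nonneg_left hDβ (by linarith)
  have hK : K ≤ D * |K| := (le_abs_self K).trans (le_mul_of_one_le_left (abs_nonneg K) hD)
  have hL : L * D ≤ D * |L| := by rw [mul_comm]; gcongr; exact le_abs_self L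
  simp only [N] at hDN
  linarith

theorem hasDerivAt_const_mul_one_add_rpow_neg (D α : ℝ) {t : ℝ} (ht : -1 < t) :
    HasDerivAt (fun t => D * (1 + t) ^ (-α)) (-(α * D) * (1 + t) ^ (-(α + 1))) t := by
  have h := ((hasDerivAt_rpow_const (p := -α) (Or.inl (by linarith : 1 + t ≠ 0))).comp t
    ((hasDerivAt_id t).const_add 1)).const_mul D
  refine h.congr_deriv ?_
  rw [show -α - 1 = -(α + 1) by ring]
  ring

theorem mul_one_add_rpow_neg_strict_supersolution {β κ C D M t : ℝ} (hβ : 0 < β) (hC : 0 ≤ C)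
    (hD : 0 ≤ D) (ht : -1 < t) (hexp : exp (-κ * t) ≤ M * (1 + t) ^ (-(1 / β + 1)))
    (hDM : C * M + D / β < C * D ^ (1 + β)) :
    -C * (D * (1 + t) ^ (-(1 / β))) ^ (1 + β) + C * exp (-κ * t)
      < -(1 / β * D) * (1 + t) ^ (-(1 / β + 1)) := by
  have h1t : 0 < 1 + t := by linarith
  set E := (1 + t) ^ (-(1 / β + 1))
  have hE : 0 < E := rpow_pos_of_pos h1t _
  have hpow : (D * (1 + t) ^ (-(1 / β))) ^ (1 + β) = D ^ (1 + β) * E := by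
    rw [mul_rpow hD (rpow_nonneg h1t.le _), ← rpow_mul h1t.le]
    congr 2
    field_simp
  have hgap : (C * M + D / β - C * D ^ (1 + β)) * E < 0 :=
    mul_neg_of_neg_of_pos (by linarith) hE
  calc -C * (D * (1 + t) ^ (-(1 / β))) ^ (1 + β) + C * exp (-κ * t)
      ≤ -C * (D ^ (1 + β) * E) + C * (M * E) := by
        rw [hpow]; gcongr
    _ < -(1 / β * D) * E := by linear_combination hgap

theorem le_mul_one_add_rpow_neg_of_deriv_le {β κ C : ℝ} {F F' : ℝ → ℝ} (hβ : 0 < β) (hκ : 0 < κ)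
    (hC : 0 < C) (hF : ∀ τ, 0 ≤ τ → HasDerivWithinAt F (F' τ) (Ici 0) τ)
    (hF' : ∀ τ, 0 ≤ τ → F' τ ≤ -C * F τ ^ (1 + β) + C * exp (-κ * τ)) :
    ∃ D, 0 < D ∧ ∀ τ, 0 ≤ τ → F τ ≤ D * (1 + τ) ^ (-(1 / β)) := by
  set M := ((1 / β + 1) / κ) ^ (1 / β + 1) * exp (κ - (1 / β + 1))
  have hexp : ∀ t, 0 ≤ t → exp (-κ * t) ≤ M * (1 + t) ^ (-(1 / β + 1)) := fun t ht => by
    rw [neg_mul]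
    exact exp_neg_mul_le_mul_one_add_rpow_neg (by positivity) hκ (by linarith)
  obtain ⟨D, hFD, hD, hDM⟩ := exists_add_mul_lt_rpow_one_add hβ M (1 / (β * C)) (F 0)
  have hDM' : C * M + D / β < C * D ^ (1 + β) := by
    calc C * M + D / β = C * (M + 1 / (β * C) * D) := by field_simp
      _ < C * D ^ (1 + β) := mul_lt_mul_of_pos_left hDM hC
  have hG : ∀ t, 0 ≤ t → HasDerivAt (fun t => D * (1 + t) ^ (-(1 / β)))
      (-(1 / β * D) * (1 + t) ^ (-(1 / β + 1))) t := fun t ht =>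
    hasDerivAt_const_mul_one_add_rpow_neg D (1 / β) (by linarith)
  refine ⟨D, by linarith, fun τ hτ => ?_⟩
  refine image_le_of_deriv_right_lt_deriv_boundary' (a := 0) (b := τ)
    (fun t ht => (hF t ht.1).continuousWithinAt.mono Icc_subset_Ici_self)
    (fun t ht => (hF t ht.1).mono (Ici_subset_Ici.mpr ht.1)) (by simpa using hFD)
    (fun t ht => (hG t ht.1).continuousAt.continuousWithinAt)
    (fun t ht => (hG t ht.1).hasDerivWithinAt) (fun t ht hFt => ?_) ⟨hτ, le_rfl⟩
  calc F' t ≤ -C * F t ^ (1 + β) + C * exp (-κ * t) := hF' t ht.1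
    _ < _ := by
      rw [hFt]
      exact mul_one_add_rpow_neg_strict_supersolution hβ hC.le (by linarith)
        (by linarith [ht.1]) (hexp t ht.1) hDM'

theorem stmt_9_general (θ' C : ℝ) (hθ' : θ' ∈ Set.Ioo (0 : ℝ) (1 / 2)) (hC : 0 < C)
    (F F' : ℝ → ℝ)
    (hFderiv : ∀ τ : ℝ, 0 ≤ τ → HasDerivWithinAt F (F' τ) (Ici (0 : ℝ)) τ)
    (hineq : ∀ τ : ℝ, 0 ≤ τ →
      F' τ ≤ -C * F τ ^ (2 * (1 - θ')) + C * Real.exp (-2 * τ)) :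
    ∃ D : ℝ, 0 < D ∧ ∀ τ : ℝ, 0 ≤ τ →
      F τ ≤ D * (1 + τ) ^ (-(1 / (1 - 2 * θ'))) := by
  have hexponent : 2 * (1 - θ') = 1 + (1 - 2 * θ') := by ring
  rw [hexponent] at hineq
  exact le_mul_one_add_rpow_neg_of_deriv_le (by linarith [hθ'.2]) two_pos hC hFderiv hineq

/-- **Polynomial decay from the Łojasiewicz differential inequality** (Section 9.1): if
`F : [0,∞) → [0,∞)` is differentiable with
`F'(τ) ≤ −C F(τ)^{2(1−θ')} + C e^{−2τ}` for all `τ ≥ 0`, where `θ' ∈ (0,1/2)` and `C > 0`,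
then there is `D > 0` (depending only on `F(0)`, `C`, `θ'`) with
`F(τ) ≤ D (1+τ)^{−1/(1−2θ')}` for all `τ ≥ 0`. -/
theorem stmt_9 (θ' C : ℝ) (hθ' : θ' ∈ Set.Ioo (0 : ℝ) (1 / 2)) (hC : 0 < C)
    (F F' : ℝ → ℝ)
    (hFnonneg : ∀ τ : ℝ, 0 ≤ τ → 0 ≤ F τ)
    (hFderiv : ∀ τ : ℝ, 0 ≤ τ → HasDerivWithinAt F (F' τ) (Ici (0 : ℝ)) τ)
    (hineq : ∀ τ : ℝ, 0 ≤ τ →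
      F' τ ≤ -C * F τ ^ (2 * (1 - θ')) + C * Real.exp (-2 * τ)) :
    ∃ D : ℝ, 0 < D ∧ ∀ τ : ℝ, 0 ≤ τ →
      F τ ≤ D * (1 + τ) ^ (-(1 / (1 - 2 * θ'))) :=
  stmt_9_general θ' C hθ' hC F F' hFderiv hineq
end

section
/- Let n ≥ 1 and let f : ℝ^n → ℝ be a smooth, compactly supported function. Then ∫_{ℝ^n} f(x)² |x|² e^{−|x|²/4} dx ≤ 4 ∫_{ℝ^n} ( n·f(x)² + 4·|∇f(x)|² ) e^{−|x|²/4} dx, where dx denotes Lebesgue measure and |∇f| the Euclidean norm of the gradient. -/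
/-!
For the Gaussian weight `w = exp (-‖x‖² / 4)` one has `Dw(x) x = -‖x‖² w / 2`. Integrating
`div (h x) = Dh(x) x + n h` over the space (integration by parts against the coordinate
functions) gives `∫ Dh(x) x = -n ∫ h`; for `h = f² w` this reads
`½ ∫ f² ‖x‖² w = n ∫ f² w + ∫ 2 f Df(x) x w`. Bounding `2 f Df(x) x ≤ ¼ f² ‖x‖² + 4 ‖Df‖²`
and absorbing the `¼` term into the left-hand side yields the inequality.
-/

open MeasureTheory Module Real
open scoped ContDiff

section Euler

variable {E : Type*} [NormedAddCommGroup E] [NormedSpace ℝ E] [FiniteDimensional ℝ E]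
  [MeasurableSpace E] [BorelSpace E]

theorem integral_fderiv_apply_self (μ : Measure E) [μ.IsAddHaarMeasure] {h : E → ℝ}
    (hh : ContDiff ℝ 1 h) (hsupp : HasCompactSupport h) :
    ∫ x, fderiv ℝ h x x ∂μ = -(finrank ℝ E) * ∫ x, h x ∂μ := by
  let b := Module.finBasis ℝ E
  let ℓ (i : Fin (finrank ℝ E)) : E →L[ℝ] ℝ := LinearMap.toContinuousLinearMap (b.coord i)
  have hint (i : Fin (finrank ℝ E)) : Integrable (fun x ↦ fderiv ℝ h x (b i) * ℓ i x) μ :=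
    (((hh.continuous_fderiv one_ne_zero).clm_apply continuous_const).mul
      (ℓ i).continuous).integrable_of_hasCompactSupport (hsupp.fderiv_apply ℝ (b i)).mul_right
  have hcoord (i : Fin (finrank ℝ E)) :
      ∫ x, fderiv ℝ h x (b i) * ℓ i x ∂μ = -∫ x, h x ∂μ := by
    have hℓ : ℓ i (b i) = 1 := by simp [ℓ]
    have ibp := integral_mul_fderiv_eq_neg_fderiv_mul_of_integrable (g := ℓ i) (v := b i) (hint i)
      (by simpa only [(ℓ i).fderiv, hℓ, mul_one] using
        hh.continuous.integrable_of_hasCompactSupport (μ := μ) hsupp)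
      ((hh.continuous.mul (ℓ i).continuous).integrable_of_hasCompactSupport hsupp.mul_right)
      (fun x _ ↦ (hh.differentiable one_ne_zero).differentiableAt)
      (fun x _ ↦ (ℓ i).differentiableAt)
    simp only [(ℓ i).fderiv, hℓ, mul_one] at ibp
    rw [ibp, neg_neg]
  have hsum (x : E) : fderiv ℝ h x x = ∑ i, fderiv ℝ h x (b i) * ℓ i x := calc
    fderiv ℝ h x x = fderiv ℝ h x (∑ i, b.repr x i • b i) := by rw [b.sum_repr]
    _ = _ := by
      simp only [map_sum, map_smul, smul_eq_mul, ℓ, LinearMap.coe_toContinuousLinearMap',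
        Basis.coord_apply, mul_comm]
  simp_rw [hsum, integral_finsetSum _ (fun i _ ↦ hint i), hcoord]
  simp

end Euler

section Gaussian

variable {E : Type*} [NormedAddCommGroup E] [InnerProductSpace ℝ E]

theorem hasFDerivAt_exp_neg_norm_sq_div_four (x : E) :
    HasFDerivAt (fun y : E ↦ exp (-‖y‖ ^ 2 / 4))
      ((-exp (-‖x‖ ^ 2 / 4) / 2) • innerSL ℝ x) x := by
  have h := ((hasStrictFDerivAt_norm_sq x).hasFDerivAt.mul_const (-1 / 4 : ℝ)).exp
  convert h using 1
  · ext y; ring_nf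
  · ext v
    simp only [smul_apply, coe_innerSL_apply, smul_eq_mul, nsmul_eq_mul,
      show ‖x‖ ^ 2 * (-1 / 4 : ℝ) = -‖x‖ ^ 2 / 4 by ring]
    ring

theorem contDiff_exp_neg_norm_sq_div_four {k : WithTop ℕ∞} :
    ContDiff ℝ k fun y : E ↦ exp (-‖y‖ ^ 2 / 4) :=
  contDiff_exp.comp ((contDiff_norm_sq ℝ).neg.div_const 4)

theorem fderiv_sq_mul_exp_neg_norm_sq_div_four_apply_self {f : E → ℝ} {x : E}
    (hf : DifferentiableAt ℝ f x) :
    fderiv ℝ (fun y ↦ f y ^ 2 * exp (-‖y‖ ^ 2 / 4)) x x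
      = (2 * f x * fderiv ℝ f x x - f x ^ 2 * ‖x‖ ^ 2 / 2) * exp (-‖x‖ ^ 2 / 4) := by
  rw [HasFDerivAt.fderiv (f := fun y ↦ f y ^ 2 * exp (-‖y‖ ^ 2 / 4))
    ((hf.hasFDerivAt.pow 2).mul (hasFDerivAt_exp_neg_norm_sq_div_four x))]
  simp only [add_apply, smul_apply, coe_innerSL_apply,
    real_inner_self_eq_norm_sq, smul_eq_mul, nsmul_eq_mul]
  ring

end Gaussian

theorem two_mul_mul_apply_le {E : Type*} [NormedAddCommGroup E] [NormedSpace ℝ E]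
    (L : E →L[ℝ] ℝ) (a : ℝ) (x : E) :
    2 * a * L x ≤ a ^ 2 * ‖x‖ ^ 2 / 4 + 4 * ‖L‖ ^ 2 := by
  have hCS : a * L x ≤ |a| * (‖L‖ * ‖x‖) := calc
    a * L x ≤ |a| * |L x| := (le_abs_self _).trans (abs_mul a (L x)).le
    _ ≤ |a| * (‖L‖ * ‖x‖) := mul_le_mul_of_nonneg_left (L.le_opNorm x) (abs_nonneg a)
  nlinarith [sq_nonneg (|a| * ‖x‖ / 2 - 2 * ‖L‖), sq_abs a]

section Sobolev

variable {E : Type*} [NormedAddCommGroup E] [InnerProductSpace ℝ E] [FiniteDimensional ℝ E]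
  [MeasurableSpace E] [BorelSpace E]

theorem integral_sq_mul_norm_sq_mul_exp_le (μ : Measure E) [μ.IsAddHaarMeasure] {f : E → ℝ}
    (hf : ContDiff ℝ 1 f) (hsupp : HasCompactSupport f) :
    ∫ x, f x ^ 2 * ‖x‖ ^ 2 * exp (-‖x‖ ^ 2 / 4) ∂μ
      ≤ 4 * ∫ x, ((finrank ℝ E) * f x ^ 2 + 4 * ‖fderiv ℝ f x‖ ^ 2) * exp (-‖x‖ ^ 2 / 4) ∂μ := by
  set w : E → ℝ := fun x ↦ exp (-‖x‖ ^ 2 / 4)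
  set h : E → ℝ := fun x ↦ f x ^ 2 * w x
  have hw : Continuous w := (contDiff_exp_neg_norm_sq_div_four (k := 0)).continuous
  have hDf : Continuous (fderiv ℝ f) := hf.continuous_fderiv one_ne_zero
  have hsupp_sq : HasCompactSupport fun x ↦ f x ^ 2 := hsupp.comp_left (g := (· ^ 2)) (by simp)
  have hh : ContDiff ℝ 1 h := (hf.pow 2).mul contDiff_exp_neg_norm_sq_div_four
  have hhsupp : HasCompactSupport h := hsupp_sq.mul_right
  have hint_lhs : Integrable (fun x ↦ f x ^ 2 * ‖x‖ ^ 2 * w x) μ :=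
    ((hf.continuous.pow 2).mul (continuous_norm.pow 2) |>.mul hw).integrable_of_hasCompactSupport
      hsupp_sq.mul_right.mul_right
  have hint_h : Integrable h μ := hh.continuous.integrable_of_hasCompactSupport hhsupp
  have hint_grad : Integrable (fun x ↦ ‖fderiv ℝ f x‖ ^ 2 * w x) μ :=
    have hsupp_grad : HasCompactSupport fun x ↦ ‖fderiv ℝ f x‖ ^ 2 :=
      (hsupp.fderiv ℝ).comp_left (g := (‖·‖ ^ 2)) (by simp)
    ((hDf.norm.pow 2).mul hw).integrable_of_hasCompactSupport hsupp_grad.mul_right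
  have hint_Dh : Integrable (fun x ↦ fderiv ℝ h x x) μ :=
    ((hh.continuous_fderiv one_ne_zero).clm_apply continuous_id).integrable_of_hasCompactSupport
      (hhsupp.mono' fun x hx ↦ support_fderiv_subset ℝ fun h0 ↦ hx (by simp [h0]))
  have hpointwise (x : E) :
      f x ^ 2 * ‖x‖ ^ 2 * w x ≤ 16 * (‖fderiv ℝ f x‖ ^ 2 * w x) - 4 * fderiv ℝ h x x := by
    rw [fderiv_sq_mul_exp_neg_norm_sq_div_four_apply_self (hf.differentiable one_ne_zero x)]
    have := two_mul_mul_apply_le (fderiv ℝ f x) (f x) x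
    have := mul_le_mul_of_nonneg_right this (exp_pos (-‖x‖ ^ 2 / 4)).le
    linarith
  calc ∫ x, f x ^ 2 * ‖x‖ ^ 2 * w x ∂μ
      ≤ ∫ x, 16 * (‖fderiv ℝ f x‖ ^ 2 * w x) - 4 * fderiv ℝ h x x ∂μ :=
        integral_mono hint_lhs ((hint_grad.const_mul 16).sub (hint_Dh.const_mul 4)) hpointwise
    _ = 16 * ∫ x, ‖fderiv ℝ f x‖ ^ 2 * w x ∂μ + 4 * finrank ℝ E * ∫ x, h x ∂μ := by
        rw [integral_sub (hint_grad.const_mul 16) (hint_Dh.const_mul 4), integral_const_mul,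
          integral_const_mul, integral_fderiv_apply_self μ hh hhsupp]
        ring
    _ = 4 * ∫ x, ((finrank ℝ E) * f x ^ 2 + 4 * ‖fderiv ℝ f x‖ ^ 2) * w x ∂μ := by
        rw [← integral_const_mul, ← integral_const_mul, ← integral_add (hint_grad.const_mul 16)
          (hint_h.const_mul _), ← integral_const_mul]
        congr 1 with x
        ring

end Sobolev

theorem stmt_12_general (n : ℕ) (f : EuclideanSpace ℝ (Fin n) → ℝ)
    (hf : ContDiff ℝ ∞ f) (hsupp : HasCompactSupport f) :
    (∫ x : EuclideanSpace ℝ (Fin n), f x ^ 2 * ‖x‖ ^ 2 * Real.exp (-‖x‖ ^ 2 / 4))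
      ≤ 4 * ∫ x : EuclideanSpace ℝ (Fin n),
          ((n : ℝ) * f x ^ 2 + 4 * ‖gradient f x‖ ^ 2) * Real.exp (-‖x‖ ^ 2 / 4) := by
  have hgrad (x : EuclideanSpace ℝ (Fin n)) : ‖gradient f x‖ = ‖fderiv ℝ f x‖ :=
    LinearIsometryEquiv.norm_map _ _
  simpa [hgrad] using integral_sq_mul_norm_sq_mul_exp_le volume (hf.of_le (by simp)) hsupp

/-- **Ecker's weighted Sobolev inequality in the flat case** (Proposition 3.13 for a
hyperplane through the origin): for every smooth compactly supported `f : ℝⁿ → ℝ`,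
`∫ f² |x|² e^{−|x|²/4} dx ≤ 4 ∫ (n f² + 4 |∇f|²) e^{−|x|²/4} dx`. -/
theorem stmt_12 (n : ℕ) (hn : 1 ≤ n) (f : EuclideanSpace ℝ (Fin n) → ℝ)
    (hf : ContDiff ℝ ∞ f) (hsupp : HasCompactSupport f) :
    (∫ x : EuclideanSpace ℝ (Fin n), f x ^ 2 * ‖x‖ ^ 2 * Real.exp (-‖x‖ ^ 2 / 4))
      ≤ 4 * ∫ x : EuclideanSpace ℝ (Fin n),
          ((n : ℝ) * f x ^ 2 + 4 * ‖gradient f x‖ ^ 2) * Real.exp (-‖x‖ ^ 2 / 4) :=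
  stmt_12_general n f hf hsupp
end
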